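/- Let Δ : I → ℝ be real analytic on an interval I, not identically zero, with Δ ≥ 0, and suppose Δ vanishes at t′ ∈ I to order exactly 2k with k ≥ 1. Then the function Δ̃(t) := Δ(t) + (Δ′(t))²/Δ(t) (defined where Δ(t) > 0 and extended by its limit) vanishes at t′ to order exactly 2k − 2. -/

import Mathlib

/-!
Since `Δ` is analytic with a zero of order `n = 2k` at `t'`, near `t'` we can write
`Δ t = (t - t') ^ n * g t` with `g` analytic and `g t' ≠ 0`; nonnegativity of `Δ` makes
`g t' > 0`. Then `Δ' t = (t - t') ^ (n - 1) * (n * g t + (t - t') * g' t)`, so off `t'`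
`Δ̃ t / (t - t') ^ (n - 2) = (t - t') ^ 2 * g t + (n * g t + (t - t') * g' t) ^ 2 / g t`,
which is continuous at `t'` with value `n ^ 2 * g t' > 0`.
-/

open Filter Topology

theorem pow_add_two_mul_add_sq_div {K : Type*} [Field K] {u : K} (hu : u ≠ 0) (m : ℕ) (g h : K) :
    u ^ (m + 2) * g + (u ^ (m + 1) * h) ^ 2 / (u ^ (m + 2) * g)
      = u ^ m * (u ^ 2 * g + h ^ 2 / g) := by
  rcases eq_or_ne g 0 with rfl | hg
  · simp
  · field_simp
    ring

theorem nonneg_of_eventually_eq_even_pow_mul {f g : ℝ → ℝ} {x : ℝ} {n : ℕ} (hn : Even n)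
    (hg : ContinuousAt g x) (hf : ∀ᶠ t in 𝓝[≠] x, 0 ≤ f t)
    (hfg : ∀ᶠ t in 𝓝[≠] x, f t = (t - x) ^ n * g t) : 0 ≤ g x := by
  refine ge_of_tendsto (hg.tendsto.mono_left (nhdsWithin_le_nhds (s := {x}ᶜ))) ?_
  filter_upwards [hf, hfg, self_mem_nhdsWithin] with t hft hfgt (ht : t ≠ x)
  exact nonneg_of_mul_nonneg_right (hfgt ▸ hft) (hn.pow_pos (sub_ne_zero.2 ht))

section

variable {𝕜 : Type*} [NontriviallyNormedField 𝕜]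

theorem AnalyticAt.analyticOrderAt_eq_of_iteratedDeriv [CharZero 𝕜] {E : Type*}
    [NormedAddCommGroup E] [NormedSpace 𝕜 E] [CompleteSpace E] {f : 𝕜 → E} {x : 𝕜} {n : ℕ}
    (hf : AnalyticAt 𝕜 f x) (hvan : ∀ j < n, iteratedDeriv j f x = 0)
    (hne : iteratedDeriv n f x ≠ 0) : analyticOrderAt f x = n := by
  refine le_antisymm ?_ ((natCast_le_analyticOrderAt_iff_iteratedDeriv_eq_zero hf).2 hvan)
  refine Order.le_of_lt_add_one (not_le.1 fun h => hne ?_)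
  exact (natCast_le_analyticOrderAt_iff_iteratedDeriv_eq_zero (n := n + 1) hf).1 h n n.lt_succ_self

theorem hasDerivAt_sub_pow_succ_mul {g : 𝕜 → 𝕜} {g' x t : 𝕜} (hg : HasDerivAt g g' t) (m : ℕ) :
    HasDerivAt (fun s => (s - x) ^ (m + 1) * g s)
      ((t - x) ^ m * ((m + 1) * g t + (t - x) * g')) t := by
  refine ((((hasDerivAt_id' t).sub_const x).fun_pow (m + 1)).fun_mul hg).congr_deriv ?_
  push_cast
  ring

theorem tendsto_add_sq_deriv_div_div_sub_pow [CompleteSpace 𝕜] {f g : 𝕜 → 𝕜} {x : 𝕜} {m : ℕ}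
    (hg : AnalyticAt 𝕜 g x) (hgx : g x ≠ 0) (hfg : ∀ᶠ t in 𝓝 x, f t = (t - x) ^ (m + 2) * g t) :
    Tendsto (fun t => (f t + deriv f t ^ 2 / f t) / (t - x) ^ m) (𝓝[≠] x)
      (𝓝 ((m + 2) ^ 2 * g x)) := by
  have hderiv : ∀ᶠ t in 𝓝 x,
      deriv f t = (t - x) ^ (m + 1) * ((m + 2) * g t + (t - x) * deriv g t) := by
    filter_upwards [hfg.eventually_nhds, hg.eventually_analyticAt] with t hft hgt
    rw [EventuallyEq.deriv_eq hft,
      (hasDerivAt_sub_pow_succ_mul hgt.differentiableAt.hasDerivAt (m + 1)).deriv]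
    push_cast
    ring
  have hF : ContinuousAt
      (fun t => (t - x) ^ 2 * g t + ((m + 2) * g t + (t - x) * deriv g t) ^ 2 / g t) x := by
    fun_prop (disch := exact hgx)
  have hlim := hF.tendsto.mono_left (nhdsWithin_le_nhds (s := {x}ᶜ))
  convert hlim.congr' ?_ using 2
  · field_simp
    ring
  filter_upwards [nhdsWithin_le_nhds hfg, nhdsWithin_le_nhds hderiv, self_mem_nhdsWithin]
    with t hft hdt (ht : t ≠ x)
  have hu : t - x ≠ 0 := sub_ne_zero.2 ht
  rw [hft, hdt, pow_add_two_mul_add_sq_div hu, mul_div_cancel_left₀ _ (pow_ne_zero _ hu)]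

end

/-- If `Δ ≥ 0` is real analytic, vanishing at `t′` to order exactly `2k` (`k ≥ 1`),
then `Δ̃ = Δ + (Δ′)²/Δ` vanishes at `t′` to order exactly `2k - 2`, in the sense
that `Δ̃(t)/(t-t′)^{2k-2}` tends to a positive constant as `t → t′`, `t ≠ t′`. -/
theorem stmt_6 (Δ : ℝ → ℝ) (t' : ℝ) (k : ℕ) (hk : 1 ≤ k)
    (han : AnalyticAt ℝ Δ t') (hnn : ∀ t, 0 ≤ Δ t)
    (hvan : ∀ j < 2 * k, iteratedDeriv j Δ t' = 0)
    (hne : iteratedDeriv (2 * k) Δ t' ≠ 0)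
    (Δtilde : ℝ → ℝ)
    (hΔt : ∀ t, Δtilde t = Δ t + (deriv Δ t) ^ 2 / Δ t) :
    ∃ c : ℝ, 0 < c ∧
      Tendsto (fun t => Δtilde t / (t - t') ^ (2 * k - 2)) (nhdsWithin t' {t'}ᶜ) (nhds c) := by
  obtain ⟨g, hg, hgt', hΔg⟩ := han.analyticOrderAt_eq_natCast.1
    (han.analyticOrderAt_eq_of_iteratedDeriv hvan hne)
  simp only [smul_eq_mul] at hΔg
  have hg_pos : 0 < g t' := (nonneg_of_eventually_eq_even_pow_mul (even_two_mul k)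
    hg.continuousAt (.of_forall hnn) (nhdsWithin_le_nhds hΔg)).lt_of_ne' hgt'
  obtain ⟨m, hm⟩ : ∃ m, 2 * k = m + 2 := ⟨2 * k - 2, by omega⟩
  rw [hm] at hΔg
  refine ⟨(m + 2) ^ 2 * g t', by positivity, ?_⟩
  simpa only [hΔt, hm, Nat.add_sub_cancel] using
    tendsto_add_sq_deriv_div_div_sub_pow hg hgt' hΔg
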